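/- arXiv:1207.5699 — 4 statements merged into one kernel-verified Lean document; each statement's English description precedes it below -/
import Mathlib

section
/- At most one negative weight on an unbranched segment: let J be an N×N real symmetric matrix with zero row sums that is stable, let G be its support graph, and let v_0, v_1, …, v_d (d ≥ 2) be distinct vertices such that {v_{k−1}, v_k} is an edge of G for every k = 1, …, d and such that each interior vertex v_1, …, v_{d−1} has exactly two neighbors in G (namely its path neighbors). Then at most one of the weights w_k = J_{v_{k−1} v_k}, k = 1, …, d, is negative. -/
open scoped Classical

/-- The weight assigned to an unordered pair `e = {i,j}`: `J (min i j) (max i j)`.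
For symmetric `J` this is the common value `J i j = J j i`. -/
noncomputable def edgeWeight {N : ℕ} (J : Matrix (Fin N) (Fin N) ℝ) (e : Sym2 (Fin N)) : ℝ :=
  J e.inf e.sup

/-- `F` is a spanning forest (on all of `Fin N`, isolated vertices allowed) each of whose
connected components contains exactly one vertex not in `S`. -/
def IsPhiForest {N : ℕ} (S : Finset (Fin N)) (F : Finset (Sym2 (Fin N))) : Prop :=
  (∀ e ∈ F, ¬ e.IsDiag) ∧
  (SimpleGraph.fromEdgeSet (↑F : Set (Sym2 (Fin N)))).IsAcyclic ∧
  ∀ c : (SimpleGraph.fromEdgeSet (↑F : Set (Sym2 (Fin N)))).ConnectedComponent,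
    ∃! v : Fin N, v ∈ c.supp ∧ v ∉ S

/-- `Φ_S`: the sum over all spanning forests `F` each of whose components contains exactly
one vertex not in `S`, of the product of the weights `J_{ij}` of the edges of `F`. -/
noncomputable def Phi {N : ℕ} (J : Matrix (Fin N) (Fin N) ℝ) (S : Finset (Fin N)) : ℝ :=
  ∑ F ∈ Finset.univ.filter (fun F : Finset (Sym2 (Fin N)) => IsPhiForest S F),
    ∏ e ∈ F, edgeWeight J e

/-- `J` is stable: negative semidefinite with kernel the span of the all-ones vector. -/
def IsStable {N : ℕ} (J : Matrix (Fin N) (Fin N) ℝ) : Prop :=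
  (-J).PosSemidef ∧
  LinearMap.ker J.mulVecLin = Submodule.span ℝ {(fun _ => 1 : Fin N → ℝ)}

/-- The graph on `Fin N` with an edge `{i,j}` whenever `J i j > 0` (for `i ≠ j`). -/
def posGraph {N : ℕ} (J : Matrix (Fin N) (Fin N) ℝ) : SimpleGraph (Fin N) :=
  SimpleGraph.fromRel fun i j => 0 < J i j

/-- The graph on `Fin N` with an edge `{i,j}` whenever `J i j ≠ 0` (for `i ≠ j`). -/
def supportGraph {N : ℕ} (J : Matrix (Fin N) (Fin N) ℝ) : SimpleGraph (Fin N) :=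
  SimpleGraph.fromRel fun i j => J i j ≠ 0

open Matrix in
private lemma quad_identity {N : ℕ} (J : Matrix (Fin N) (Fin N) ℝ)
    (hsym : J.IsSymm) (hrow : ∀ i, ∑ j, J i j = 0) (x : Fin N → ℝ) :
    ∑ i, ∑ j, J i j * (x i - x j)^2 = -2 * (x ⬝ᵥ J.mulVec x) := by
  have hcol : ∀ j, ∑ i, J i j = 0 := by
    intro j
    have h : ∑ i, J i j = ∑ i, J j i :=
      Finset.sum_congr rfl fun i _ => (hsym.apply i j).symm
    rw [h, hrow]
  have h1 : ∑ i, ∑ j, x i ^ 2 * J i j = 0 := by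
    simp_rw [← Finset.mul_sum, hrow, mul_zero, Finset.sum_const_zero]
  have h2 : ∑ i, ∑ j, x j ^ 2 * J i j = 0 := by
    rw [Finset.sum_comm]
    simp_rw [← Finset.mul_sum, hcol, mul_zero, Finset.sum_const_zero]
  have h3 : x ⬝ᵥ J.mulVec x = ∑ i, ∑ j, x i * (J i j * x j) := by
    simp [Matrix.mulVec, dotProduct, Finset.mul_sum]
  calc ∑ i, ∑ j, J i j * (x i - x j)^2
      = ∑ i, ∑ j, (x i ^ 2 * J i j - 2 * (x i * (J i j * x j)) + x j ^ 2 * J i j) := by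
        refine Finset.sum_congr rfl fun i _ => Finset.sum_congr rfl fun j _ => by ring
    _ = (∑ i, ∑ j, x i ^ 2 * J i j) - 2 * (∑ i, ∑ j, x i * (J i j * x j))
          + ∑ i, ∑ j, x j ^ 2 * J i j := by
        simp [Finset.sum_add_distrib, Finset.sum_sub_distrib, Finset.mul_sum]
    _ = -2 * (x ⬝ᵥ J.mulVec x) := by rw [h1, h2, h3]; ring

open Matrix in
private lemma no_two_neg {N d : ℕ} (J : Matrix (Fin N) (Fin N) ℝ)
    (hsym : J.IsSymm) (hrow : ∀ i, ∑ j, J i j = 0) (hstab : IsStable J)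
    (v : ℕ → Fin N)
    (hinj : ∀ i ≤ d, ∀ j ≤ d, v i = v j → i = j)
    (hint : ∀ k, 1 ≤ k → k ≤ d - 1 →
      ∀ u : Fin N, (supportGraph J).Adj (v k) u ↔ (u = v (k - 1) ∨ u = v (k + 1)))
    (p q : ℕ) (hp1 : 1 ≤ p) (hqd : q ≤ d) (hpq : p < q)
    (hwp : J (v (p - 1)) (v p) < 0) (hwq : J (v (q - 1)) (v q) < 0) : False := by
  set c : ℕ → ℝ := fun k => if p ≤ k ∧ k < q then 1 else 0 with hc
  have hcval : ∀ k, c k = if p ≤ k ∧ k < q then 1 else 0 := fun _ => rfl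
  set x : Fin N → ℝ := fun u => ∑ k ∈ Finset.range (d + 1), if v k = u then c k else 0 with hxdef
  have hxval : ∀ u, x u = ∑ k ∈ Finset.range (d + 1), if v k = u then c k else 0 := fun _ => rfl
  have hx : ∀ k ≤ d, x (v k) = c k := by
    intro k hk
    rw [hxval]
    rw [Finset.sum_eq_single_of_mem k (Finset.mem_range.mpr (by omega))]
    · simp
    · intro m hm hmk
      rw [if_neg]
      intro h
      exact hmk (hinj m (Nat.lt_succ_iff.mp (Finset.mem_range.mp hm)) k hk h)
  have hx0 : ∀ u, x u ≠ 0 → ∃ k, 1 ≤ k ∧ k ≤ d - 1 ∧ u = v k ∧ k ≤ d := by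
    intro u hu
    rw [hxval] at hu
    obtain ⟨m, hm, hne⟩ := Finset.exists_ne_zero_of_sum_ne_zero hu
    by_cases h : v m = u
    · rw [if_pos h] at hne
      have hcm : p ≤ m ∧ m < q := by
        by_contra hcon
        rw [hcval, if_neg hcon] at hne; exact hne rfl
      exact ⟨m, by omega, by omega, h.symm, by omega⟩
    · rw [if_neg h] at hne; exact absurd rfl hne
  set f : Fin N → Fin N → ℝ := fun i j => J i j * (x i - x j) ^ 2 with hf
  have hfval : ∀ i j, f i j = J i j * (x i - x j) ^ 2 := fun _ _ => rfl
  set E1 : Finset ℕ := Finset.Icc 1 d with hE1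
  set A : Finset (Fin N × Fin N) := E1.image (fun k => (v (k - 1), v k)) with hA
  set B : Finset (Fin N × Fin N) := E1.image (fun k => (v k, v (k - 1))) with hB
  have hmemE1 : ∀ k, k ∈ E1 ↔ 1 ≤ k ∧ k ≤ d := by intro k; simp [hE1]
  have hsupp : ∀ i j : Fin N, f i j ≠ 0 → (i, j) ∈ A ∪ B := by
    intro i j hne
    have hJ : J i j ≠ 0 := fun h => hne (by rw [hfval, h]; ring)
    have hxij : x i ≠ x j := by
      intro h; exact hne (by rw [hfval, h]; ring)
    have hij : i ≠ j := fun h => hxij (by rw [h])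
    rcases (by
      by_contra hcon
      push_neg at hcon
      exact hxij (hcon.1.trans hcon.2.symm) : x i ≠ 0 ∨ x j ≠ 0) with hi | hj
    · obtain ⟨k, hk1, hk2, rfl, hkd⟩ := hx0 i hi
      have hadjk : (supportGraph J).Adj (v k) j :=
        (SimpleGraph.fromRel_adj _ _ _).mpr ⟨hij, Or.inl hJ⟩
      rcases (hint k hk1 hk2 j).mp hadjk with rfl | rfl
      · exact Finset.mem_union_right _ (Finset.mem_image.mpr ⟨k, (hmemE1 k).mpr ⟨hk1, hkd⟩, rfl⟩)
      · refine Finset.mem_union_left _ (Finset.mem_image.mpr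
          ⟨k + 1, (hmemE1 _).mpr ⟨by omega, by omega⟩, ?_⟩)
        simp
    · obtain ⟨k, hk1, hk2, rfl, hkd⟩ := hx0 j hj
      have hadjk : (supportGraph J).Adj (v k) i :=
        (SimpleGraph.fromRel_adj _ _ _).mpr ⟨hij.symm, Or.inr hJ⟩
      rcases (hint k hk1 hk2 i).mp hadjk with rfl | rfl
      · exact Finset.mem_union_left _ (Finset.mem_image.mpr ⟨k, (hmemE1 k).mpr ⟨hk1, hkd⟩, rfl⟩)
      · refine Finset.mem_union_right _ (Finset.mem_image.mpr
          ⟨k + 1, (hmemE1 _).mpr ⟨by omega, by omega⟩, ?_⟩)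
        simp
  have hAB : Disjoint A B := by
    rw [Finset.disjoint_left]
    rintro ⟨a, b⟩ hA' hB'
    obtain ⟨k, hk, hk'⟩ := Finset.mem_image.mp hA'
    obtain ⟨m, hm, hm'⟩ := Finset.mem_image.mp hB'
    rw [hmemE1] at hk hm
    rw [← hm'] at hk'
    have e1 : v (k - 1) = v m := congrArg Prod.fst hk'
    have e2 : v k = v (m - 1) := congrArg Prod.snd hk'
    have h1 := hinj (k - 1) (by omega) m (by omega) e1
    have h2 := hinj k (by omega) (m - 1) (by omega) e2
    omega
  have hQA : ∑ e ∈ A, f e.1 e.2 = ∑ k ∈ E1, J (v (k - 1)) (v k) * (c (k - 1) - c k) ^ 2 := by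
    rw [hA, Finset.sum_image]
    · refine Finset.sum_congr rfl fun k hk => ?_
      rw [hmemE1] at hk
      rw [hfval, hx (k - 1) (by omega), hx k (by omega)]
    · intro a ha b hb h
      rw [Finset.mem_coe, hmemE1] at ha hb
      exact hinj a ha.2 b hb.2 (congrArg Prod.snd h)
  have hQB : ∑ e ∈ B, f e.1 e.2 = ∑ k ∈ E1, J (v (k - 1)) (v k) * (c (k - 1) - c k) ^ 2 := by
    rw [hB, Finset.sum_image]
    · refine Finset.sum_congr rfl fun k hk => ?_
      rw [hmemE1] at hk
      rw [hfval, hx (k - 1) (by omega), hx k (by omega), hsym.apply]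
      ring
    · intro a ha b hb h
      rw [Finset.mem_coe, hmemE1] at ha hb
      exact hinj a ha.2 b hb.2 (congrArg Prod.fst h)
  have hQ : ∑ i, ∑ j, f i j
      = 2 * ∑ k ∈ E1, J (v (k - 1)) (v k) * (c (k - 1) - c k) ^ 2 := by
    rw [← Finset.sum_product', Finset.univ_product_univ]
    rw [← Finset.sum_subset (Finset.subset_univ (A ∪ B))
      (fun e _ he => by_contra fun hne => he (by
        have := hsupp e.1 e.2 hne
        simpa using this))]
    rw [Finset.sum_union hAB, hQA, hQB]
    ring
  have hsum : ∑ k ∈ E1, J (v (k - 1)) (v k) * (c (k - 1) - c k) ^ 2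
      = J (v (p - 1)) (v p) + J (v (q - 1)) (v q) := by
    rw [← Finset.sum_subset (show ({p, q} : Finset ℕ) ⊆ E1 by
      intro k hk
      rw [hmemE1]
      rcases Finset.mem_insert.mp hk with rfl | hk
      · omega
      · rw [Finset.mem_singleton] at hk; omega)]
    · rw [Finset.sum_pair (by omega : p ≠ q)]
      have hcp : c p = 1 := by rw [hcval, if_pos ⟨le_refl p, hpq⟩]
      have hcp1 : c (p - 1) = 0 := by rw [hcval, if_neg (by omega)]
      have hcq : c q = 0 := by rw [hcval, if_neg (by omega)]
      have hcq1 : c (q - 1) = 1 := by rw [hcval, if_pos (by omega)]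
      rw [hcp, hcp1, hcq, hcq1]
      ring
    · intro k hk hk'
      rw [hmemE1] at hk
      simp only [Finset.mem_insert, Finset.mem_singleton] at hk'
      push_neg at hk'
      have hck : c k = c (k - 1) := by
        rw [hcval, hcval]
        split_ifs <;> first | rfl | (exfalso; omega)
      rw [hck]
      ring
  have hquad := quad_identity J hsym hrow x
  have hpsd := hstab.1.dotProduct_mulVec_nonneg x
  rw [Matrix.neg_mulVec, dotProduct_neg] at hpsd
  have hstar : star x = x := by simp
  rw [hstar] at hpsd
  have hge : (0 : ℝ) ≤ -2 * (x ⬝ᵥ J.mulVec x) := by linarith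
  rw [← hquad, hQ, hsum] at hge
  linarith

/-- **At most one negative weight on an unbranched segment.**  Let `J` be real symmetric
with zero row sums and stable, and let `v 0, v 1, …, v d` (`d ≥ 2`) be distinct vertices
forming a path in the support graph `G` of `J`, each interior vertex of which has exactly
its two path neighbours as neighbours in `G`.  Then at most one of the weights
`w_k = J (v (k-1)) (v k)`, `k = 1, …, d`, is negative. -/
theorem at_most_one_negative_on_segment (N d : ℕ) (J : Matrix (Fin N) (Fin N) ℝ)
    (hsym : J.IsSymm) (hrow : ∀ i, ∑ j, J i j = 0) (hstab : IsStable J)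
    (hd : 2 ≤ d) (v : ℕ → Fin N)
    (hinj : ∀ i ≤ d, ∀ j ≤ d, v i = v j → i = j)
    (hadj : ∀ k, 1 ≤ k → k ≤ d → (supportGraph J).Adj (v (k - 1)) (v k))
    (hint : ∀ k, 1 ≤ k → k ≤ d - 1 →
      ∀ u : Fin N, (supportGraph J).Adj (v k) u ↔ (u = v (k - 1) ∨ u = v (k + 1))) :
    ((Finset.Icc 1 d).filter fun k => J (v (k - 1)) (v k) < 0).card ≤ 1 := by
  by_contra hcard
  push_neg at hcard
  obtain ⟨a, ha, b, hb, hab⟩ := Finset.one_lt_card.mp hcard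
  rw [Finset.mem_filter, Finset.mem_Icc] at ha hb
  rcases hab.lt_or_gt with h | h
  · exact no_two_neg J hsym hrow hstab v hinj hint a b ha.1.1 hb.1.2 h ha.2 hb.2
  · exact no_two_neg J hsym hrow hstab v hinj hint b a hb.1.1 ha.1.2 h hb.2 ha.2
end

section
/- Bound on the negative weight of an unbranched segment: let J be an N×N real symmetric matrix with zero row sums that is stable, let G be its support graph, and let v_0, v_1, …, v_d (d ≥ 2) be distinct vertices such that {v_{k−1}, v_k} is an edge of G for every k = 1, …, d and such that each interior vertex v_1, …, v_{d−1} has exactly two neighbors in G. Set w_k = J_{v_{k−1} v_k}, and suppose there is exactly one index x ∈ {1, …, d} with w_x < 0 while w_k > 0 for all k ≠ x. Then |w_x| · ∑_{k∈{1,…,d}, k≠x} 1/w_k < 1; equivalently |w_x| < (∑_{k≠x} 1/w_k)^{−1}. -/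
open scoped Classical

open scoped Matrix

/-- **Bound on the negative weight of an unbranched segment.**  Let `J` be real symmetric
with zero row sums and stable, let `v 0, v 1, …, v d` (`d ≥ 2`) be distinct vertices
forming a path in the support graph `G` of `J`, each interior vertex of which has exactly
its two path neighbours as neighbours in `G`, and set `w k = J (v (k-1)) (v k)`.  If
exactly one weight `w x` is negative, the others being positive, then
`|w x| · ∑_{k ≠ x} 1 / w k < 1`. -/
theorem negative_weight_bound_on_segment (N d : ℕ) (J : Matrix (Fin N) (Fin N) ℝ)
    (hsym : J.IsSymm) (hrow : ∀ i, ∑ j, J i j = 0) (hstab : IsStable J)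
    (hd : 2 ≤ d) (v : ℕ → Fin N)
    (hinj : ∀ i ≤ d, ∀ j ≤ d, v i = v j → i = j)
    (hadj : ∀ k, 1 ≤ k → k ≤ d → (supportGraph J).Adj (v (k - 1)) (v k))
    (hint : ∀ k, 1 ≤ k → k ≤ d - 1 →
      ∀ u : Fin N, (supportGraph J).Adj (v k) u ↔ (u = v (k - 1) ∨ u = v (k + 1)))
    (x : ℕ) (hx : x ∈ Finset.Icc 1 d)
    (hneg : J (v (x - 1)) (v x) < 0)
    (hpos : ∀ k ∈ Finset.Icc 1 d, k ≠ x → 0 < J (v (k - 1)) (v k)) :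
    |J (v (x - 1)) (v x)| * ∑ k ∈ (Finset.Icc 1 d).erase x, (J (v (k - 1)) (v k))⁻¹ < 1 := by
  classical
  -- abbreviations
  set w : ℕ → ℝ := fun k => J (v (k - 1)) (v k) with hw
  have hJsym : ∀ i j, J i j = J j i := fun i j => by
    simpa using congrFun (congrFun hsym j) i
  have hcol : ∀ j, ∑ i, J i j = 0 := by
    intro j
    calc ∑ i, J i j = ∑ i, J j i := Finset.sum_congr rfl fun i _ => hJsym i j
    _ = 0 := hrow j
  obtain ⟨hx1, hxd⟩ := Finset.mem_Icc.mp hx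
  set S : ℝ := ∑ k ∈ (Finset.Icc 1 d).erase x, (w k)⁻¹ with hSdef
  have hSpos : 0 < S := by
    apply Finset.sum_pos
    · intro k hk
      obtain ⟨hkx, hk⟩ := Finset.mem_erase.mp hk
      exact inv_pos.mpr (hpos k hk hkx)
    · rcases eq_or_ne x 1 with h1 | h1
      · exact ⟨2, Finset.mem_erase.mpr ⟨by omega, Finset.mem_Icc.mpr ⟨by omega, hd⟩⟩⟩
      · exact ⟨1, Finset.mem_erase.mpr ⟨h1.symm, Finset.mem_Icc.mpr ⟨le_rfl, by omega⟩⟩⟩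
  set Δ : ℕ → ℝ := fun k => if k = x then S else -(w k)⁻¹ with hΔdef
  set t : ℕ → ℝ := fun k => ∑ j ∈ Finset.Icc 1 k, Δ j with htdef
  set u : Fin N → ℝ := fun i => ∑ k ∈ Finset.Ico 1 d, if i = v k then t k else 0 with hudef
  have ht0 : t 0 = 0 := by simp [htdef]
  have htd : t d = 0 := by
    have h1 : t d = Δ x + ∑ k ∈ (Finset.Icc 1 d).erase x, Δ k :=
      (Finset.add_sum_erase _ Δ hx).symm
    have h2 : ∑ k ∈ (Finset.Icc 1 d).erase x, Δ k = -S := by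
      rw [hSdef, ← Finset.sum_neg_distrib]
      refine Finset.sum_congr rfl fun k hk => ?_
      have hkx := (Finset.mem_erase.mp hk).1
      simp [hΔdef, hkx]
    rw [h1, h2]
    simp [hΔdef]
  have hΔstep : ∀ k, 1 ≤ k → t k - t (k - 1) = Δ k := by
    intro k hk
    obtain ⟨m, rfl⟩ : ∃ m, k = m + 1 := ⟨k - 1, by omega⟩
    have : t (m + 1) = t m + Δ (m + 1) := Finset.sum_Icc_succ_top (by omega) Δ
    simp only [Nat.add_sub_cancel]
    rw [this]; ring
  have huv : ∀ k ≤ d, u (v k) = t k := by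
    intro k hk
    by_cases hmem : k ∈ Finset.Ico 1 d
    · show (∑ j ∈ Finset.Ico 1 d, if v k = v j then t j else 0) = t k
      rw [Finset.sum_eq_single_of_mem k hmem]
      · simp
      · intro j hj hjk
        obtain ⟨_, hjd⟩ := Finset.mem_Ico.mp hj
        have : v k ≠ v j := fun h => hjk (hinj j (by omega) k hk h.symm)
        simp [this]
    · have hk0 : k = 0 ∨ k = d := by
        rw [Finset.mem_Ico] at hmem; omega
      have hz : u (v k) = 0 := by
        show (∑ j ∈ Finset.Ico 1 d, if v k = v j then t j else 0) = 0
        apply Finset.sum_eq_zero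
        intro j hj
        obtain ⟨_, hjd⟩ := Finset.mem_Ico.mp hj
        have : v k ≠ v j := by
          intro h
          have := hinj k hk j (by omega) h
          omega
        simp [this]
      rcases hk0 with rfl | rfl
      · rw [hz, ht0]
      · rw [hz, htd]
  have hnz : ∀ i, u i ≠ 0 → ∃ k ∈ Finset.Ico 1 d, i = v k := by
    intro i hi
    obtain ⟨k, hk, hne⟩ := Finset.exists_ne_zero_of_sum_ne_zero hi
    refine ⟨k, hk, ?_⟩
    by_contra h
    simp [h] at hne
  -- the quadratic form
  have hQ1 : ∑ i, ∑ j, J i j * (u i - u j) ^ 2 = -2 * (u ⬝ᵥ (J *ᵥ u)) := by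
    have hexp : ∀ i j : Fin N, J i j * (u i - u j) ^ 2
        = u i ^ 2 * J i j - 2 * (u i * (J i j * u j)) + u j ^ 2 * J i j := by
      intro i j; ring
    simp only [hexp, Finset.sum_add_distrib, Finset.sum_sub_distrib]
    have e1 : ∑ i : Fin N, ∑ j : Fin N, u i ^ 2 * J i j = 0 := by
      refine Finset.sum_eq_zero fun i _ => ?_
      rw [← Finset.mul_sum, hrow, mul_zero]
    have e3 : ∑ i : Fin N, ∑ j : Fin N, u j ^ 2 * J i j = 0 := by
      rw [Finset.sum_comm]
      refine Finset.sum_eq_zero fun j _ => ?_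
      rw [← Finset.mul_sum, hcol, mul_zero]
    have e2 : ∑ i : Fin N, ∑ j : Fin N, u i * (J i j * u j) = u ⬝ᵥ (J *ᵥ u) := by
      simp [dotProduct, Matrix.mulVec, Finset.mul_sum]
    have e2' : ∑ i : Fin N, ∑ j : Fin N, 2 * (u i * (J i j * u j))
        = 2 * (u ⬝ᵥ (J *ᵥ u)) := by
      rw [← e2, Finset.mul_sum]
      exact Finset.sum_congr rfl fun i _ => by rw [Finset.mul_sum]
    rw [e1, e3, e2']
    ring
  -- edge decomposition
  have hsupp : ∀ i j : Fin N, i ≠ j → J i j ≠ 0 → (supportGraph J).Adj i j := by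
    intro i j hne hJ
    exact (SimpleGraph.fromRel_adj _ i j).mpr ⟨hne, Or.inl hJ⟩
  set g1 : ℕ → Fin N × Fin N := fun k => (v (k - 1), v k) with hg1
  set g2 : ℕ → Fin N × Fin N := fun k => (v k, v (k - 1)) with hg2
  set E : Finset (Fin N × Fin N) :=
    (Finset.Icc 1 d).image g1 ∪ (Finset.Icc 1 d).image g2 with hE
  have hedge : ∀ i j : Fin N, J i j ≠ 0 → u i ≠ u j → (i, j) ∈ E := by
    intro i j hJ hne
    have hij : i ≠ j := fun h => hne (by rw [h])
    by_cases hui : u i = 0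
    · have huj : u j ≠ 0 := fun h => hne (by rw [hui, h])
      obtain ⟨k, hk, rfl⟩ := hnz j huj
      obtain ⟨hk1, hkd⟩ := Finset.mem_Ico.mp hk
      have hadj' : (supportGraph J).Adj (v k) i := by
        refine hsupp _ _ (Ne.symm hij) ?_
        rw [← hJsym i (v k)]; exact hJ
      rcases (hint k hk1 (by omega) i).mp hadj' with rfl | rfl
      · exact Finset.mem_union_left _
          (Finset.mem_image.mpr ⟨k, Finset.mem_Icc.mpr ⟨hk1, by omega⟩, rfl⟩)
      · refine Finset.mem_union_right _
          (Finset.mem_image.mpr ⟨k + 1, Finset.mem_Icc.mpr ⟨by omega, by omega⟩, ?_⟩)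
        simp [hg2]
    · obtain ⟨k, hk, rfl⟩ := hnz i hui
      obtain ⟨hk1, hkd⟩ := Finset.mem_Ico.mp hk
      have hadj' : (supportGraph J).Adj (v k) j := hsupp _ _ hij hJ
      rcases (hint k hk1 (by omega) j).mp hadj' with rfl | rfl
      · exact Finset.mem_union_right _
          (Finset.mem_image.mpr ⟨k, Finset.mem_Icc.mpr ⟨hk1, by omega⟩, rfl⟩)
      · refine Finset.mem_union_left _
          (Finset.mem_image.mpr ⟨k + 1, Finset.mem_Icc.mpr ⟨by omega, by omega⟩, ?_⟩)
        simp [hg1]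
  have hQ2 : ∑ i, ∑ j, J i j * (u i - u j) ^ 2
      = 2 * ∑ k ∈ Finset.Icc 1 d, w k * (Δ k) ^ 2 := by
    have hprod : ∑ i, ∑ j, J i j * (u i - u j) ^ 2
        = ∑ p ∈ Finset.univ ×ˢ Finset.univ,
            J p.1 p.2 * (u p.1 - u p.2) ^ 2 := by
      rw [Finset.sum_product]
    have hsub : E ⊆ Finset.univ ×ˢ Finset.univ := by
      intro p _; simp [Finset.mem_product]
    have hvan : ∀ p ∈ Finset.univ ×ˢ Finset.univ, p ∉ E →
        J p.1 p.2 * (u p.1 - u p.2) ^ 2 = 0 := by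
      rintro ⟨i, j⟩ - hpE
      by_cases hJ : J i j = 0
      · rw [hJ, zero_mul]
      · by_cases hu : u i = u j
        · rw [hu]; ring
        · exact absurd (hedge i j hJ hu) hpE
    have hinj1 : ∀ a ∈ Finset.Icc 1 d, ∀ b ∈ Finset.Icc 1 d, g1 a = g1 b → a = b := by
      intro a ha b hb hab
      obtain ⟨_, had⟩ := Finset.mem_Icc.mp ha
      obtain ⟨_, hbd⟩ := Finset.mem_Icc.mp hb
      exact hinj a had b hbd (congrArg Prod.snd hab)
    have hinj2 : ∀ a ∈ Finset.Icc 1 d, ∀ b ∈ Finset.Icc 1 d, g2 a = g2 b → a = b := by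
      intro a ha b hb hab
      obtain ⟨_, had⟩ := Finset.mem_Icc.mp ha
      obtain ⟨_, hbd⟩ := Finset.mem_Icc.mp hb
      exact hinj a had b hbd (congrArg Prod.fst hab)
    have hdisj : Disjoint ((Finset.Icc 1 d).image g1) ((Finset.Icc 1 d).image g2) := by
      rw [Finset.disjoint_left]
      rintro p hp1 hp2
      obtain ⟨a, ha, rfl⟩ := Finset.mem_image.mp hp1
      obtain ⟨b, hb, hba⟩ := Finset.mem_image.mp hp2
      obtain ⟨ha1, had⟩ := Finset.mem_Icc.mp ha
      obtain ⟨hb1, hbd⟩ := Finset.mem_Icc.mp hb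
      have e1 : v b = v (a - 1) := congrArg Prod.fst hba
      have e2 : v (b - 1) = v a := congrArg Prod.snd hba
      have h1 : b = a - 1 := hinj b hbd (a - 1) (by omega) e1
      have h2 : b - 1 = a := hinj (b - 1) (by omega) a had e2
      omega
    have hterm : ∀ k ∈ Finset.Icc 1 d,
        J (v (k - 1)) (v k) * (u (v (k - 1)) - u (v k)) ^ 2 = w k * (Δ k) ^ 2 := by
      intro k hk
      obtain ⟨hk1, hkd⟩ := Finset.mem_Icc.mp hk
      rw [huv (k - 1) (by omega), huv k hkd]
      have : (t (k - 1) - t k) ^ 2 = (t k - t (k - 1)) ^ 2 := by ring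
      rw [this, hΔstep k hk1, hw]
    calc ∑ i, ∑ j, J i j * (u i - u j) ^ 2
        = ∑ p ∈ E, J p.1 p.2 * (u p.1 - u p.2) ^ 2 := by
          rw [hprod, ← Finset.sum_subset hsub hvan]
      _ = (∑ k ∈ Finset.Icc 1 d, w k * (Δ k) ^ 2)
          + ∑ k ∈ Finset.Icc 1 d, w k * (Δ k) ^ 2 := by
          rw [hE, Finset.sum_union hdisj, Finset.sum_image hinj1, Finset.sum_image hinj2]
          congr 1
          · exact Finset.sum_congr rfl hterm
          · refine Finset.sum_congr rfl fun k hk => ?_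
            obtain ⟨hk1, hkd⟩ := Finset.mem_Icc.mp hk
            have h1 : J (v k) (v (k - 1)) = w k := (hJsym _ _).symm
            have h2 : (u (v k) - u (v (k - 1))) ^ 2
                = (u (v (k - 1)) - u (v k)) ^ 2 := by ring
            rw [hg2]
            dsimp only
            rw [h1, h2, huv (k - 1) (by omega), huv k hkd]
            have h3 : (t (k - 1) - t k) ^ 2 = (t k - t (k - 1)) ^ 2 := by ring
            rw [h3, hΔstep k hk1]
      _ = 2 * ∑ k ∈ Finset.Icc 1 d, w k * (Δ k) ^ 2 := by ring
  have hkey : u ⬝ᵥ (J *ᵥ u) = -∑ k ∈ Finset.Icc 1 d, w k * (Δ k) ^ 2 := by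
    have := hQ1.symm.trans hQ2
    linarith
  -- strict negativity
  have hQle : u ⬝ᵥ (J *ᵥ u) ≤ 0 := by
    have h := hstab.1.dotProduct_mulVec_nonneg u
    rw [star_trivial, Matrix.neg_mulVec, dotProduct_neg] at h
    linarith
  have hQne : u ⬝ᵥ (J *ᵥ u) ≠ 0 := by
    intro h0
    have h1 : star u ⬝ᵥ (-J) *ᵥ u = 0 := by
      rw [star_trivial, Matrix.neg_mulVec, dotProduct_neg, h0, neg_zero]
    have h2 : (-J) *ᵥ u = 0 := (hstab.1.dotProduct_mulVec_zero_iff u).mp h1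
    have h3 : J *ᵥ u = 0 := by
      have := congrArg Neg.neg h2
      simpa [Matrix.neg_mulVec] using this
    have h4 : u ∈ LinearMap.ker J.mulVecLin := by
      rw [LinearMap.mem_ker, Matrix.mulVecLin_apply, h3]
    rw [hstab.2, Submodule.mem_span_singleton] at h4
    obtain ⟨a, ha⟩ := h4
    have hv0 : u (v 0) = a := by
      rw [← ha]; simp
    have hv1 : u (v 1) = a := by
      rw [← ha]; simp
    have huv0 : u (v 0) = 0 := by rw [huv 0 (by omega), ht0]
    have huv1 : u (v 1) = t 1 := huv 1 (by omega)
    have ht1 : t 1 = Δ 1 := by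
      rw [htdef]; simp
    have hΔ1 : Δ 1 ≠ 0 := by
      rw [hΔdef]
      rcases eq_or_ne (1 : ℕ) x with h1 | h1
      · simp only [if_pos h1]; exact ne_of_gt hSpos
      · simp only [if_neg h1]
        have := hpos 1 (Finset.mem_Icc.mpr ⟨le_rfl, by omega⟩) h1
        simp only [neg_ne_zero]
        exact inv_ne_zero (ne_of_gt this)
    rw [huv0] at hv0
    rw [huv1, ht1] at hv1
    exact hΔ1 (by rw [hv1, ← hv0])
  have hQneg : u ⬝ᵥ (J *ᵥ u) < 0 := lt_of_le_of_ne hQle hQne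
  have hsum_pos : 0 < ∑ k ∈ Finset.Icc 1 d, w k * (Δ k) ^ 2 := by
    rw [hkey] at hQneg; linarith
  -- evaluate the sum
  have hsplit : ∑ k ∈ Finset.Icc 1 d, w k * (Δ k) ^ 2
      = w x * S ^ 2 + S := by
    rw [← Finset.add_sum_erase _ _ hx]
    have h1 : w x * (Δ x) ^ 2 = w x * S ^ 2 := by
      simp [hΔdef]
    have h2 : ∑ k ∈ (Finset.Icc 1 d).erase x, w k * (Δ k) ^ 2 = S := by
      rw [hSdef]
      refine Finset.sum_congr rfl fun k hk => ?_
      obtain ⟨hkx, hk'⟩ := Finset.mem_erase.mp hk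
      have hwk : w k ≠ 0 := ne_of_gt (hpos k hk' hkx)
      rw [hΔdef]
      simp only [if_neg hkx]
      field_simp
    rw [h1, h2]
  rw [hsplit] at hsum_pos
  have habs : |J (v (x - 1)) (v x)| = -w x := abs_of_neg hneg
  rw [habs, hSdef] at *
  nlinarith [hSpos, hsum_pos]
end

section
/- Adaptive Kuramoto determinant reduction: with J(x,b) and j̃(x) as in the context and b ≠ 0, for every subset S′ of {1, …, N} with |S′| = n, the principal minor of J(x,b) on the index set P ∪ S′ (all L pair indices together with the node indices in S′) equals (−1)^L · b^{L−n} · det(j̃(x)[S′]), where j̃(x)[S′] is the principal submatrix of j̃(x) with rows and columns indexed by S′. -/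
open scoped Classical

/-- Index type for the coupling variables `A_{pq}` with `p < q`. -/
abbrev PairIdx (N : ℕ) := {p : Fin N × Fin N // p.1 < p.2}

/-- The Jacobian `J(x,b)` of the adaptive Kuramoto model at a stationary phase-locked
state, indexed by the `N(N-1)/2` pair (coupling) variables and the `N` node (phase)
variables. -/
noncomputable def adaptJ (N : ℕ) (b : ℝ) (x : Fin N → ℝ) :
    Matrix (PairIdx N ⊕ Fin N) (PairIdx N ⊕ Fin N) ℝ :=
  fun r c =>
    match r, c with
    | Sum.inl pq, Sum.inl pq' => if pq = pq' then -b else 0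
    | Sum.inl pq, Sum.inr k =>
        if k = pq.1.1 then Real.sin (x pq.1.2 - x pq.1.1)
        else if k = pq.1.2 then Real.sin (x pq.1.1 - x pq.1.2) else 0
    | Sum.inr k, Sum.inl pq =>
        if k = pq.1.1 then Real.sin (x pq.1.2 - x pq.1.1)
        else if k = pq.1.2 then Real.sin (x pq.1.1 - x pq.1.2) else 0
    | Sum.inr i, Sum.inr k =>
        if i = k then -∑ j ∈ Finset.univ \ {i}, Real.cos (x j - x i) ^ 2 / b
        else Real.cos (x k - x i) ^ 2 / b

/-- The effective `N × N` matrix `j̃(x)` with `j̃ i k = cos (2(x k - x i))` off the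
diagonal and zero row sums. -/
noncomputable def tildej (N : ℕ) (x : Fin N → ℝ) : Matrix (Fin N) (Fin N) ℝ :=
  fun i k =>
    if i = k then -∑ j ∈ Finset.univ \ {i}, Real.cos (2 * (x j - x i))
    else Real.cos (2 * (x k - x i))

lemma cos2 (t : ℝ) : Real.cos (2*t) = Real.cos t ^2 - Real.sin t ^2 := by
  have := Real.sin_sq_add_cos_sq t
  rw [Real.cos_two_mul]; nlinarith

lemma card_pairIdx (N : ℕ) : Fintype.card (PairIdx N) = N*(N-1)/2 := by
  classical
  rw [Fintype.card_subtype]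
  set s := Finset.filter (fun p : Fin N × Fin N => p.1 < p.2) Finset.univ with hs
  set t := Finset.filter (fun p : Fin N × Fin N => p.2 < p.1) Finset.univ with ht
  have hcard : s.card = t.card := by
    apply Finset.card_nbij (fun p => (p.2, p.1))
    · intro p hp
      simp only [hs, ht, Finset.mem_filter, Finset.mem_univ, true_and] at hp ⊢
      simpa using hp
    · intro p hp q hq h; simpa [Prod.ext_iff, and_comm] using h
    · intro p hp
      simp only [ht, Finset.coe_filter, Set.mem_setOf_eq, Finset.mem_univ, true_and] at hp
      exact ⟨(p.2,p.1), by simp [hs, Finset.mem_coe, Finset.mem_filter, hp], rfl⟩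
  have hdisj : Disjoint s t := by
    rw [Finset.disjoint_filter]
    intro p _ h1; simp; omega
  have hunion : s ∪ t = (Finset.univ : Finset (Fin N)).offDiag := by
    ext p
    simp only [hs, ht, Finset.mem_offDiag, Finset.mem_union, Finset.mem_filter,
      Finset.mem_univ, true_and]
    constructor
    · rintro (h|h)
      · exact ne_of_lt h
      · exact ne_of_gt h
    · intro h
      rcases lt_or_gt_of_ne h with h'|h'
      · exact Or.inl h'
      · exact Or.inr h'
  have h2 : 2 * s.card = N * N - N := by
    have := Finset.card_union_of_disjoint hdisj
    rw [hunion, Finset.offDiag_card] at this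
    simp at this
    omega
  have : N * N - N = N * (N-1) := by cases N with
    | zero => simp
    | succ n => simp [Nat.mul_succ]
  omega

noncomputable def eFun (N : ℕ) (x : Fin N → ℝ) (pq : PairIdx N) (k : Fin N) : ℝ :=
  if k = pq.1.1 then Real.sin (x pq.1.2 - x pq.1.1)
  else if k = pq.1.2 then Real.sin (x pq.1.1 - x pq.1.2) else 0

lemma sum_e_mul_of_lt (N : ℕ) (x : Fin N → ℝ) (i k : Fin N) (hik : i < k) :
    ∑ pq : PairIdx N, eFun N x pq i * eFun N x pq k
      = -(Real.sin (x k - x i))^2 := by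
  classical
  rw [Finset.sum_eq_single (⟨(i,k), hik⟩ : PairIdx N)]
  · have h1 : ¬ k = i := by omega
    show (if i = i then Real.sin (x k - x i) else if i = k then Real.sin (x i - x k) else 0)
        * (if k = i then Real.sin (x k - x i) else if k = k then Real.sin (x i - x k) else 0)
      = -(Real.sin (x k - x i))^2
    rw [if_pos rfl, if_neg h1, if_pos rfl]
    rw [show x i - x k = -(x k - x i) by ring, Real.sin_neg]
    ring
  · rintro ⟨⟨p,q⟩,hpq⟩ - hne
    have hpq' : p < q := hpq
    show (if i = p then Real.sin (x q - x p) else if i = q then Real.sin (x p - x q) else 0)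
        * (if k = p then Real.sin (x q - x p) else if k = q then Real.sin (x p - x q) else 0) = 0
    by_cases h1 : i = p
    · by_cases h3 : k = q
      · exact (hne (Subtype.ext (Prod.ext h1.symm h3.symm))).elim
      · have h2 : ¬ k = p := by omega
        rw [if_neg h2, if_neg h3, mul_zero]
    · by_cases h2 : i = q
      · have h3 : ¬ k = p := by omega
        have h4 : ¬ k = q := by omega
        rw [if_neg h3, if_neg h4, mul_zero]
      · rw [if_neg h1, if_neg h2, zero_mul]
  · intro h; exact absurd (Finset.mem_univ _) h

lemma sum_e_mul (N : ℕ) (x : Fin N → ℝ) (i k : Fin N) (hik : i ≠ k) :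
    ∑ pq : PairIdx N, eFun N x pq i * eFun N x pq k
      = -(Real.sin (x k - x i))^2 := by
  rcases lt_or_gt_of_ne hik with h|h
  · exact sum_e_mul_of_lt N x i k h
  · rw [show -(Real.sin (x k - x i))^2 = -(Real.sin (x i - x k))^2 by
      rw [show x i - x k = -(x k - x i) by ring, Real.sin_neg]; ring]
    rw [← sum_e_mul_of_lt N x k i h]
    exact Finset.sum_congr rfl fun pq _ => mul_comm _ _

lemma sum_e_sq (N : ℕ) (x : Fin N → ℝ) (i : Fin N) :
    ∑ pq : PairIdx N, eFun N x pq i * eFun N x pq i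
      = ∑ j ∈ Finset.univ \ {i}, Real.sin (x j - x i)^2 := by
  classical
  rw [← Finset.sum_filter_of_ne
    (p := fun pq : PairIdx N => i = pq.1.1 ∨ i = pq.1.2)
    (fun pq _ h => by
      by_contra hc
      have h1 : ¬ i = pq.1.1 := fun h1 => hc (Or.inl h1)
      have h2 : ¬ i = pq.1.2 := fun h2 => hc (Or.inr h2)
      exact h (by simp only [eFun, if_neg h1, if_neg h2, mul_zero]))]
  refine Finset.sum_bij' (fun pq _ => if i = pq.1.1 then pq.1.2 else pq.1.1)
    (fun j hj => if h : i < j then ⟨(i,j), h⟩ else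
      ⟨(j,i), show j < i by
        simp only [Finset.mem_sdiff, Finset.mem_univ, Finset.mem_singleton, true_and] at hj
        omega⟩)
    ?_ ?_ ?_ ?_ ?_
  · rintro ⟨⟨p,q⟩,hpq⟩ ha
    have hpq' : p < q := hpq
    simp only [Finset.mem_filter] at ha
    have ha2 : i = p ∨ i = q := ha.2
    simp only [Finset.mem_sdiff, Finset.mem_univ, Finset.mem_singleton, true_and]
    show ¬ (if i = p then q else p) = i
    rcases ha2 with h|h
    · rw [if_pos h]; omega
    · by_cases h' : i = p
      · rw [if_pos h']; omega
      · rw [if_neg h']; omega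
  · intro j hj
    simp only [Finset.mem_sdiff, Finset.mem_univ, Finset.mem_singleton, true_and] at hj
    beta_reduce
    simp only [Finset.mem_filter, Finset.mem_univ, true_and]
    by_cases h : i < j
    · rw [dif_pos h]; exact Or.inl rfl
    · rw [dif_neg h]; exact Or.inr rfl
  · rintro ⟨⟨p,q⟩,hpq⟩ ha
    have hpq' : p < q := hpq
    simp only [Finset.mem_filter] at ha
    have ha2 : i = p ∨ i = q := ha.2
    beta_reduce
    rcases ha2 with h|h
    · subst h
      simp [hpq']
    · subst h
      have h1 : ¬ i = p := by omega
      have h2 : ¬ i < p := by omega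
      simp [h1, h2]
  · intro j hj
    simp only [Finset.mem_sdiff, Finset.mem_univ, Finset.mem_singleton, true_and] at hj
    beta_reduce
    by_cases h : i < j
    · rw [dif_pos h]
      show (if i = i then j else i) = j
      rw [if_pos rfl]
    · rw [dif_neg h]
      show (if i = j then i else j) = j
      rw [if_neg (by omega)]
  · rintro ⟨⟨p,q⟩,hpq⟩ ha
    have hpq' : p < q := hpq
    simp only [Finset.mem_filter] at ha
    have ha2 : i = p ∨ i = q := ha.2
    beta_reduce
    show (if i = p then Real.sin (x q - x p) else if i = q then Real.sin (x p - x q) else 0)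
        * (if i = p then Real.sin (x q - x p) else if i = q then Real.sin (x p - x q) else 0)
      = Real.sin (x (if i = p then q else p) - x i)^2
    rcases ha2 with h|h
    · rw [if_pos h, if_pos h, h]
      ring
    · have h' : ¬ i = p := by omega
      rw [if_neg h', if_pos h, if_neg h', h]
      ring

/-- **Adaptive Kuramoto determinant reduction.**  For `b ≠ 0` and any set `S'` of node
indices with `|S'| = n`, the principal minor of `J(x,b)` on all `L = N(N-1)/2` pair
indices together with `S'` equals `(-1)^L · b^(L-n) · det (j̃(x)[S'])`. -/
theorem adaptive_kuramoto_minor_reduction (N : ℕ) (hN : 2 ≤ N)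
    (b : ℝ) (hb : b ≠ 0) (x : Fin N → ℝ) (S' : Finset (Fin N)) :
    ((adaptJ N b x).submatrix
        (Sum.map id (fun i : ↥S' => (i : Fin N)))
        (Sum.map id (fun i : ↥S' => (i : Fin N)))).det
      = (-1 : ℝ) ^ (N * (N - 1) / 2)
        * b ^ ((N * (N - 1) / 2 : ℤ) - (S'.card : ℤ))
        * ((tildej N x).submatrix (fun i : ↥S' => (i : Fin N))
            (fun i : ↥S' => (i : Fin N))).det := by
  classical
  set Bm : Matrix (PairIdx N) ↥S' ℝ := fun pq k => eFun N x pq (k : Fin N) with hBm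
  set Cm : Matrix ↥S' (PairIdx N) ℝ := fun k pq => eFun N x pq (k : Fin N) with hCm
  set Dm : Matrix ↥S' ↥S' ℝ := fun i k =>
    if (i : Fin N) = (k : Fin N) then
      -∑ j ∈ Finset.univ \ {(i : Fin N)}, Real.cos (x j - x (i : Fin N)) ^ 2 / b
    else Real.cos (x (k : Fin N) - x (i : Fin N)) ^ 2 / b with hDm
  have hmat : (adaptJ N b x).submatrix
        (Sum.map id (fun i : ↥S' => (i : Fin N)))
        (Sum.map id (fun i : ↥S' => (i : Fin N)))
      = Matrix.fromBlocks ((-b) • (1 : Matrix (PairIdx N) (PairIdx N) ℝ)) Bm Cm Dm := by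
    ext r s
    rcases r with pq | i <;> rcases s with pq' | k
    · show (if pq = pq' then -b else 0) = ((-b) • (1 : Matrix (PairIdx N) (PairIdx N) ℝ)) pq pq'
      simp only [Matrix.smul_apply, Matrix.one_apply, smul_eq_mul]
      split_ifs <;> ring
    · rfl
    · rfl
    · rfl
  have hone : ((-b) • (1 : Matrix (PairIdx N) (PairIdx N) ℝ))
      * ((-b)⁻¹ • (1 : Matrix (PairIdx N) (PairIdx N) ℝ)) = 1 := by
    rw [Matrix.smul_mul, Matrix.mul_smul, Matrix.one_mul, smul_smul,
      mul_inv_cancel₀ (neg_ne_zero.mpr hb), one_smul]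
  haveI : Invertible ((-b) • (1 : Matrix (PairIdx N) (PairIdx N) ℝ)) :=
    ⟨(-b)⁻¹ • (1 : Matrix (PairIdx N) (PairIdx N) ℝ), by
      rw [Matrix.smul_mul, Matrix.mul_smul, Matrix.one_mul, smul_smul,
        inv_mul_cancel₀ (neg_ne_zero.mpr hb), one_smul], hone⟩
  have hinv : ⅟((-b) • (1 : Matrix (PairIdx N) (PairIdx N) ℝ))
      = (-b)⁻¹ • (1 : Matrix (PairIdx N) (PairIdx N) ℝ) := invOf_eq_right_inv hone
  have hSchur : Dm - Cm * ((-b)⁻¹ • (1 : Matrix (PairIdx N) (PairIdx N) ℝ)) * Bm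
      = b⁻¹ • ((tildej N x).submatrix (fun i : ↥S' => (i : Fin N))
          (fun i : ↥S' => (i : Fin N))) := by
    rw [Matrix.mul_smul, Matrix.mul_one, Matrix.smul_mul]
    ext i k
    rw [Matrix.sub_apply, Matrix.smul_apply, Matrix.mul_apply]
    simp only [Matrix.sub_apply, Matrix.smul_apply, Matrix.mul_apply, smul_eq_mul,
      Matrix.submatrix_apply, hBm, hCm, hDm]
    by_cases h : (i : Fin N) = (k : Fin N)
    · have hik : i = k := Subtype.ext h
      subst hik
      rw [if_pos rfl, sum_e_sq, tildej, if_pos rfl]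
      rw [Finset.sum_congr rfl (fun j _ => cos2 (x j - x (i:Fin N))),
        Finset.sum_sub_distrib, ← Finset.sum_div]
      field_simp
      ring
    · rw [if_neg h, sum_e_mul N x _ _ h, tildej, if_neg h, cos2]
      field_simp
  rw [hmat, Matrix.det_fromBlocks₁₁, hinv, hSchur, Matrix.det_smul, Matrix.det_smul,
    Matrix.det_one, mul_one, card_pairIdx, Fintype.card_coe]
  have hL2 : ((N*(N-1)/2 : ℕ) : ℤ) = (N : ℤ) * ((N : ℤ) - 1) / 2 := by
    rw [Int.natCast_div, Nat.cast_mul, Nat.cast_sub (by omega), Nat.cast_one]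
    norm_num
  rw [show ((N : ℤ) * ((N : ℤ) - 1) / 2 - (S'.card : ℤ)) = ((N*(N-1)/2 : ℕ) : ℤ) - (S'.card : ℤ) by rw [hL2]]
  rw [zpow_sub₀ hb, zpow_natCast, zpow_natCast, neg_pow, inv_pow, div_eq_mul_inv]
  ring
end

section
/- Spanning tree criterion for the adaptive Kuramoto model: with J(x,b) as in the context and b > 0, suppose J(x,b) is negative semidefinite and its kernel equals the one-dimensional span of the vector that is 0 on all P-coordinates and 1 on all N node coordinates. Then the graph on {1, …, N} with an edge {i,k} whenever cos(2(x_k − x_i)) > 0 is connected; in particular there is a spanning tree of pairs {i,k} with cos(2(x_k − x_i)) > 0. -/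
open scoped Classical

open Finset Matrix

lemma sum_ne_eq_sum_lt {N : ℕ} (h : Fin N × Fin N → ℝ) :
    ∑ p ∈ Finset.univ.filter (fun p : Fin N × Fin N => p.1 ≠ p.2), h p
      = ∑ p ∈ Finset.univ.filter (fun p : Fin N × Fin N => p.1 < p.2), (h p + h p.swap) := by
  have hsplit : Finset.univ.filter (fun p : Fin N × Fin N => p.1 ≠ p.2)
      = Finset.univ.filter (fun p : Fin N × Fin N => p.1 < p.2)
        ∪ Finset.univ.filter (fun p : Fin N × Fin N => p.2 < p.1) := by
    ext p
    simp only [Finset.mem_filter, Finset.mem_union, Finset.mem_univ, true_and]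
    exact ne_iff_lt_or_gt
  have hdisj : Disjoint (Finset.univ.filter (fun p : Fin N × Fin N => p.1 < p.2))
      (Finset.univ.filter (fun p : Fin N × Fin N => p.2 < p.1)) := by
    rw [Finset.disjoint_filter]
    intro p _ h1 h2
    exact absurd h2 (not_lt.2 h1.le)
  rw [hsplit, Finset.sum_union hdisj, Finset.sum_add_distrib]
  congr 1
  exact Finset.sum_nbij' Prod.swap Prod.swap (by simp) (by simp) (by simp) (by simp) (by simp)

lemma adaptJ_quad (N : ℕ) {b : ℝ} (hb : b ≠ 0) (x : Fin N → ℝ) (u : Fin N → ℝ) :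
    (Sum.elim (fun pq : PairIdx N =>
        (u pq.1.1 - u pq.1.2) * Real.sin (x pq.1.2 - x pq.1.1) / b) u)
      ⬝ᵥ (adaptJ N b x) *ᵥ (Sum.elim (fun pq : PairIdx N =>
        (u pq.1.1 - u pq.1.2) * Real.sin (x pq.1.2 - x pq.1.1) / b) u)
    = ∑ pq : PairIdx N,
        -((u pq.1.1 - u pq.1.2) ^ 2 * Real.cos (2 * (x pq.1.2 - x pq.1.1))) / b := by
  classical
  set a : PairIdx N → ℝ := fun pq =>
      (u pq.1.1 - u pq.1.2) * Real.sin (x pq.1.2 - x pq.1.1) / b with ha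
  set v : PairIdx N ⊕ Fin N → ℝ := Sum.elim a u with hv
  -- the inner sums against the mixed block
  have hM : ∀ (pq : PairIdx N) (w : Fin N → ℝ),
      (∑ k : Fin N, (if k = pq.1.1 then Real.sin (x pq.1.2 - x pq.1.1)
        else if k = pq.1.2 then Real.sin (x pq.1.1 - x pq.1.2) else 0) * w k)
      = Real.sin (x pq.1.2 - x pq.1.1) * (w pq.1.1 - w pq.1.2) := by
    rintro ⟨⟨p, q⟩, hpq⟩ w
    have hne : p ≠ q := ne_of_lt hpq
    simp only
    rw [← Finset.sum_subset (Finset.subset_univ {p, q})]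
    · rw [Finset.sum_pair hne, show x p - x q = -(x q - x p) by ring, Real.sin_neg]
      simp only [if_neg hne, if_neg hne.symm, if_true, eq_self_iff_true]
      ring
    · intro k _ hk
      simp only [Finset.mem_insert, Finset.mem_singleton, not_or] at hk
      rw [if_neg hk.1, if_neg hk.2, zero_mul]
  have expand : v ⬝ᵥ (adaptJ N b x) *ᵥ v
      = ∑ r, ∑ c, v r * (adaptJ N b x r c * v c) := by
    simp [dotProduct, Matrix.mulVec, Finset.mul_sum, mul_add]
  rw [expand, Fintype.sum_sum_type]
  have key1 : ∀ pq : PairIdx N,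
      (∑ c, v (Sum.inl pq) * (adaptJ N b x (Sum.inl pq) c * v c))
        = -b * a pq ^ 2 + a pq * (Real.sin (x pq.1.2 - x pq.1.1) * (u pq.1.1 - u pq.1.2)) := by
    intro pq
    rw [Fintype.sum_sum_type]
    have h1 : (∑ pq' : PairIdx N, v (Sum.inl pq) * (adaptJ N b x (Sum.inl pq) (Sum.inl pq') * v (Sum.inl pq')))
        = -b * a pq ^ 2 := by
      simp only [adaptJ, hv, Sum.elim_inl]
      rw [Finset.sum_eq_single pq]
      · simp; ring
      · intro pq' _ hne; rw [if_neg (Ne.symm hne)]; ring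
      · intro h; exact absurd (Finset.mem_univ pq) h
    have h2 : (∑ k : Fin N, v (Sum.inl pq) * (adaptJ N b x (Sum.inl pq) (Sum.inr k) * v (Sum.inr k)))
        = a pq * (Real.sin (x pq.1.2 - x pq.1.1) * (u pq.1.1 - u pq.1.2)) := by
      simp only [adaptJ, hv, Sum.elim_inl, Sum.elim_inr]
      rw [← Finset.mul_sum]
      congr 1
      simpa using hM pq u
    rw [h1, h2]
  have key2 : (∑ i : Fin N, ∑ c, v (Sum.inr i) * (adaptJ N b x (Sum.inr i) c * v c))
      = (∑ pq : PairIdx N, a pq * (Real.sin (x pq.1.2 - x pq.1.1) * (u pq.1.1 - u pq.1.2)))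
        + ∑ i : Fin N, ∑ k ∈ Finset.univ \ {i},
            (Real.cos (x k - x i) ^ 2 / b) * (u i * u k - u i ^ 2) := by
    have : ∀ i : Fin N, (∑ c, v (Sum.inr i) * (adaptJ N b x (Sum.inr i) c * v c))
        = (∑ pq : PairIdx N, u i * (adaptJ N b x (Sum.inr i) (Sum.inl pq) * a pq))
          + ∑ k ∈ Finset.univ \ {i},
              (Real.cos (x k - x i) ^ 2 / b) * (u i * u k - u i ^ 2) := by
      intro i
      rw [Fintype.sum_sum_type]
      congr 1
      -- node-node part
      have hdiag : (∑ k : Fin N, v (Sum.inr i) * (adaptJ N b x (Sum.inr i) (Sum.inr k) * v (Sum.inr k)))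
          = (∑ k ∈ Finset.univ \ {i}, u i * ((Real.cos (x k - x i) ^ 2 / b) * u k))
            + u i * ((-∑ j ∈ Finset.univ \ {i}, Real.cos (x j - x i) ^ 2 / b) * u i) := by
        rw [Finset.sum_eq_sum_sdiff_singleton_add (Finset.mem_univ i)]
        congr 1
        · apply Finset.sum_congr rfl
          intro k hk
          have hki : ¬ (i = k) := by
            simp only [Finset.mem_sdiff, Finset.mem_singleton] at hk
            exact fun h => hk.2 h.symm
          simp only [adaptJ, hv, Sum.elim_inr, if_neg hki]
        · simp [adaptJ, hv]
      rw [hdiag]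
      have h3 : u i * ((-∑ j ∈ Finset.univ \ {i}, Real.cos (x j - x i) ^ 2 / b) * u i)
          = ∑ j ∈ Finset.univ \ {i}, -(Real.cos (x j - x i) ^ 2 / b * u i ^ 2) := by
        rw [neg_mul, mul_neg, Finset.sum_mul, Finset.mul_sum, ← Finset.sum_neg_distrib]
        exact Finset.sum_congr rfl fun j _ => by ring
      rw [h3, ← Finset.sum_add_distrib]
      exact Finset.sum_congr rfl fun k _ => by ring
    rw [Finset.sum_congr rfl fun i _ => this i, Finset.sum_add_distrib]
    congr 1
    rw [Finset.sum_comm]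
    apply Finset.sum_congr rfl
    intro pq _
    have h4 : ∀ i : Fin N, u i * (adaptJ N b x (Sum.inr i) (Sum.inl pq) * a pq)
        = ((if i = pq.1.1 then Real.sin (x pq.1.2 - x pq.1.1)
            else if i = pq.1.2 then Real.sin (x pq.1.1 - x pq.1.2) else 0) * u i) * a pq := by
      intro i
      simp only [adaptJ]
      ring
    rw [Finset.sum_congr rfl fun i _ => h4 i, ← Finset.sum_mul, hM pq u]
    ring
  rw [Finset.sum_congr rfl fun pq _ => key1 pq, key2]
  have hNN : (∑ i : Fin N, ∑ k ∈ Finset.univ \ {i},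
        (Real.cos (x k - x i) ^ 2 / b) * (u i * u k - u i ^ 2))
      = ∑ pq : PairIdx N,
          -(Real.cos (x pq.1.2 - x pq.1.1) ^ 2 / b * (u pq.1.1 - u pq.1.2) ^ 2) := by
    set h : Fin N × Fin N → ℝ :=
      fun p => Real.cos (x p.2 - x p.1) ^ 2 / b * (u p.1 * u p.2 - u p.1 ^ 2) with hh
    have step1 : (∑ i : Fin N, ∑ k ∈ Finset.univ \ {i},
          (Real.cos (x k - x i) ^ 2 / b) * (u i * u k - u i ^ 2))
        = ∑ p ∈ Finset.univ.filter (fun p : Fin N × Fin N => p.1 ≠ p.2), h p := by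
      rw [Finset.sum_filter, Fintype.sum_prod_type]
      apply Finset.sum_congr rfl
      intro i _
      rw [← Finset.sum_filter]
      apply Finset.sum_congr
      · ext k
        simp [Finset.mem_filter, Finset.mem_sdiff, ne_comm]
      · intro k _; rfl
    have step2 : ∑ p ∈ Finset.univ.filter (fun p : Fin N × Fin N => p.1 < p.2),
          (h p + h p.swap)
        = ∑ pq : PairIdx N, (h pq.1 + h pq.1.swap) :=
      Finset.sum_subtype (p := fun p : Fin N × Fin N => p.1 < p.2) _
        (fun p => by simp) _
    rw [step1, sum_ne_eq_sum_lt h, step2]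
    apply Finset.sum_congr rfl
    intro pq _
    simp only [hh, Prod.fst_swap, Prod.snd_swap]
    rw [show x pq.1.1 - x pq.1.2 = -(x pq.1.2 - x pq.1.1) by ring, Real.cos_neg]
    ring
  rw [hNN, ← Finset.sum_add_distrib, ← Finset.sum_add_distrib]
  apply Finset.sum_congr rfl
  intro pq _
  simp only [ha]
  rw [Real.cos_two_mul']
  field_simp
  ring

/-- **Spanning tree criterion for the adaptive Kuramoto model.**  For `b > 0`, if `J(x,b)`
is negative semidefinite with kernel the span of the vector which is `0` on the pair
coordinates and `1` on the node coordinates, then the graph on the nodes with an edge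
`{i,k}` whenever `cos (2(x k - x i)) > 0` is connected; in particular there is a spanning
tree of pairs with `cos (2(x k - x i)) > 0`. -/
theorem adaptive_kuramoto_spanning_tree_criterion (N : ℕ) (hN : 2 ≤ N)
    (b : ℝ) (hb : 0 < b) (x : Fin N → ℝ)
    (hpsd : (-(adaptJ N b x)).PosSemidef)
    (hker : LinearMap.ker (adaptJ N b x).mulVecLin
      = Submodule.span ℝ {(Sum.elim (fun _ => 0) (fun _ => 1) : PairIdx N ⊕ Fin N → ℝ)}) :
    (SimpleGraph.fromRel fun i k : Fin N => 0 < Real.cos (2 * (x k - x i))).Connected := by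
  classical
  set G := SimpleGraph.fromRel fun i k : Fin N => 0 < Real.cos (2 * (x k - x i)) with hG
  have hNe : Nonempty (Fin N) := ⟨⟨0, by omega⟩⟩
  rw [SimpleGraph.connected_iff]
  refine ⟨fun i0 j0 => ?_, hNe⟩
  by_contra hreach
  set u : Fin N → ℝ := fun k => if G.Reachable i0 k then 1 else 0 with hu
  set v : PairIdx N ⊕ Fin N → ℝ := Sum.elim (fun pq : PairIdx N =>
      (u pq.1.1 - u pq.1.2) * Real.sin (x pq.1.2 - x pq.1.1) / b) u with hvdef
  have hedge : ∀ pq : PairIdx N, 0 < Real.cos (2 * (x pq.1.2 - x pq.1.1)) →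
      u pq.1.1 = u pq.1.2 := by
    intro pq hcos
    have hadj : G.Adj pq.1.1 pq.1.2 := by
      rw [hG, SimpleGraph.fromRel_adj]
      exact ⟨ne_of_lt pq.2, Or.inl hcos⟩
    have hiff : G.Reachable i0 pq.1.1 ↔ G.Reachable i0 pq.1.2 :=
      ⟨fun h => h.trans hadj.reachable, fun h => h.trans hadj.symm.reachable⟩
    simp only [hu]
    by_cases h : G.Reachable i0 pq.1.1
    · rw [if_pos h, if_pos (hiff.1 h)]
    · rw [if_neg h, if_neg (fun h' => h (hiff.2 h'))]
  have hterm : ∀ pq : PairIdx N,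
      0 ≤ -((u pq.1.1 - u pq.1.2) ^ 2 * Real.cos (2 * (x pq.1.2 - x pq.1.1))) / b := by
    intro pq
    apply div_nonneg _ hb.le
    rcases lt_or_ge 0 (Real.cos (2 * (x pq.1.2 - x pq.1.1))) with hc | hc
    · rw [hedge pq hc]; simp
    · nlinarith [sq_nonneg (u pq.1.1 - u pq.1.2)]
  have hQ := adaptJ_quad N hb.ne' x u
  have hge : 0 ≤ v ⬝ᵥ (adaptJ N b x) *ᵥ v := by
    rw [hvdef, hQ]
    exact Finset.sum_nonneg fun pq _ => hterm pq
  have hle : v ⬝ᵥ ((-(adaptJ N b x)) *ᵥ v) = - (v ⬝ᵥ (adaptJ N b x) *ᵥ v) := by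
    rw [Matrix.neg_mulVec, dotProduct_neg]
  have h2 := hpsd.dotProduct_mulVec_nonneg v
  rw [star_trivial, hle] at h2
  have h0 : v ⬝ᵥ ((-(adaptJ N b x)) *ᵥ v) = 0 := by
    rw [hle]; linarith
  have hker0 : (adaptJ N b x) *ᵥ v = 0 := by
    have := (hpsd.dotProduct_mulVec_zero_iff v).1 (by rw [star_trivial]; exact h0)
    rw [Matrix.neg_mulVec] at this
    exact neg_eq_zero.1 this
  have hvmem : v ∈ LinearMap.ker (adaptJ N b x).mulVecLin := by
    rw [LinearMap.mem_ker, Matrix.mulVecLin_apply]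
    exact hker0
  rw [hker, Submodule.mem_span_singleton] at hvmem
  obtain ⟨c, hc⟩ := hvmem
  have hci : c = u i0 := by
    have := congrFun hc (Sum.inr i0)
    simpa [hvdef] using this
  have hcj : c = u j0 := by
    have := congrFun hc (Sum.inr j0)
    simpa [hvdef] using this
  have hui : u i0 = 1 := by
    simp only [hu]
    exact if_pos (SimpleGraph.Reachable.refl i0)
  have huj : u j0 = 0 := by simp [hu, hreach]
  rw [hci, hui] at hcj
  rw [huj] at hcj
  norm_num at hcj
end
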